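/- For a block matrix M = [[0, I], [−A, 0]] ∈ ℂ^{2n×2n} with A ∈ ℂ^{n×n}, and vectors b, z ∈ ℂ^n, the top half of exp(tM)·[b; z] equals cos(tR)b + t·sinc(tR)z, where R is any square root of A (interpreting cos(tR) and sinc(tR) as the power series in A of the previous statement). -/

import Mathlib

/-- Matrix cosine, defined by its power series. -/
noncomputable def mcos {ι : Type} [Fintype ι] [DecidableEq ι]
    (X : Matrix ι ι ℂ) : Matrix ι ι ℂ :=
  ∑' k : ℕ, (((-1 : ℂ) ^ k / (Nat.factorial (2 * k)) : ℂ)) • X ^ (2 * k)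

/-- Matrix sine, defined by its power series. -/
noncomputable def msin {ι : Type} [Fintype ι] [DecidableEq ι]
    (X : Matrix ι ι ℂ) : Matrix ι ι ℂ :=
  ∑' k : ℕ, (((-1 : ℂ) ^ k / (Nat.factorial (2 * k + 1)) : ℂ)) • X ^ (2 * k + 1)

/-- Matrix sinc, defined by its power series. -/
noncomputable def msinc {ι : Type} [Fintype ι] [DecidableEq ι]
    (X : Matrix ι ι ℂ) : Matrix ι ι ℂ :=
  ∑' k : ℕ, (((-1 : ℂ) ^ k / (Nat.factorial (2 * k + 1)) : ℂ)) • X ^ (2 * k)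

/-- Matrix hyperbolic cosine, defined by its power series. -/
noncomputable def mcosh {ι : Type} [Fintype ι] [DecidableEq ι]
    (X : Matrix ι ι ℂ) : Matrix ι ι ℂ :=
  ∑' k : ℕ, ((1 / (Nat.factorial (2 * k)) : ℂ)) • X ^ (2 * k)

/-- Matrix hyperbolic sine, defined by its power series. -/
noncomputable def msinh {ι : Type} [Fintype ι] [DecidableEq ι]
    (X : Matrix ι ι ℂ) : Matrix ι ι ℂ :=
  ∑' k : ℕ, ((1 / (Nat.factorial (2 * k + 1)) : ℂ)) • X ^ (2 * k + 1)

/-- Matrix hyperbolic sinc, defined by its power series. -/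
noncomputable def msinch {ι : Type} [Fintype ι] [DecidableEq ι]
    (X : Matrix ι ι ℂ) : Matrix ι ι ℂ :=
  ∑' k : ℕ, ((1 / (Nat.factorial (2 * k + 1)) : ℂ)) • X ^ (2 * k)

/-- Matrix exponential, defined by its power series. -/
noncomputable def mexp {ι : Type} [Fintype ι] [DecidableEq ι]
    (X : Matrix ι ι ℂ) : Matrix ι ι ℂ :=
  ∑' k : ℕ, ((1 / (Nat.factorial k) : ℂ)) • X ^ k

/-- `cos(t√A)` expressed as a power series in `A` (independent of the square root). -/
noncomputable def cosOfSq {ι : Type} [Fintype ι] [DecidableEq ι]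
    (A : Matrix ι ι ℂ) (t : ℂ) : Matrix ι ι ℂ :=
  ∑' k : ℕ, (((-1 : ℂ) ^ k * t ^ (2 * k) / (Nat.factorial (2 * k)) : ℂ)) • A ^ k

/-- `sinc(t√A)` expressed as a power series in `A` (independent of the square root). -/
noncomputable def sincOfSq {ι : Type} [Fintype ι] [DecidableEq ι]
    (A : Matrix ι ι ℂ) (t : ℂ) : Matrix ι ι ℂ :=
  ∑' k : ℕ, (((-1 : ℂ) ^ k * t ^ (2 * k) / (Nat.factorial (2 * k + 1)) : ℂ)) • A ^ k

/-!
Since `M ^ 2 = fromBlocks (-A) 0 0 (-A)`, the even powers of `t • M` are block diagonal with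
blocks `t ^ (2k) (-A) ^ k`, and the odd ones have top-right block `t ^ (2k+1) (-A) ^ k`. Splitting
the exponential series into its even and odd parts therefore gives
`exp (t • M) = fromBlocks (cos (t√A)) (t • sinc (t√A)) (-t • A * sinc (t√A)) (cos (t√A))`,
and the top half of `exp (t • M) *ᵥ (b, z)` is read off from the first block row.
-/

open Matrix Nat

theorem HasSum.matrix_fromBlocks {X R l m n o : Type*} [AddCommMonoid R] [TopologicalSpace R]
    {fA : X → Matrix n l R} {fB : X → Matrix n m R} {fC : X → Matrix o l R}
    {fD : X → Matrix o m R} {a : Matrix n l R} {b : Matrix n m R} {c : Matrix o l R}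
    {d : Matrix o m R} (hA : HasSum fA a) (hB : HasSum fB b) (hC : HasSum fC c)
    (hD : HasSum fD d) :
    HasSum (fun x => fromBlocks (fA x) (fB x) (fC x) (fD x)) (fromBlocks a b c d) := by
  refine Pi.hasSum.2 fun i => Pi.hasSum.2 fun j => ?_
  rcases i with i | i <;> rcases j with j | j
  · exact Pi.hasSum.1 (Pi.hasSum.1 hA i) j
  · exact Pi.hasSum.1 (Pi.hasSum.1 hB i) j
  · exact Pi.hasSum.1 (Pi.hasSum.1 hC i) j
  · exact Pi.hasSum.1 (Pi.hasSum.1 hD i) j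

theorem neg_pow_eq_neg_one_pow_smul (R : Type*) {𝔸 : Type*} [CommRing R] [Ring 𝔸] [Algebra R 𝔸]
    (a : 𝔸) (k : ℕ) : (-a) ^ k = ((-1 : R) ^ k) • a ^ k := by
  rw [← neg_one_smul R a, smul_pow]

theorem summable_smul_pow_of_norm_le {𝕜 𝔸 : Type*} [NormedField 𝕜] [NormedRing 𝔸]
    [NormedAlgebra 𝕜 𝔸] [CompleteSpace 𝔸] {c : ℕ → 𝕜} {r : ℝ} (hc : ∀ k, ‖c k‖ ≤ r ^ k / k !)
    (x : 𝔸) : Summable fun k => c k • x ^ k := by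
  refine .of_norm_bounded_eventually_nat (Real.summable_pow_div_factorial (r * ‖x‖)) ?_
  filter_upwards [Filter.eventually_gt_atTop 0] with k hk
  calc ‖c k • x ^ k‖ ≤ ‖c k‖ * ‖x‖ ^ k :=
        (norm_smul_le _ _).trans (mul_le_mul_of_nonneg_left (norm_pow_le' x hk) (norm_nonneg _))
    _ ≤ r ^ k / k ! * ‖x‖ ^ k := mul_le_mul_of_nonneg_right (hc k) (by positivity)
    _ = (r * ‖x‖) ^ k / k ! := by ring

theorem norm_neg_one_pow_mul_pow_two_mul_div_factorial_le {𝕜 : Type*} [RCLike 𝕜] (t : 𝕜)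
    {k d : ℕ} (hkd : k ≤ d) : ‖(-1) ^ k * t ^ (2 * k) / (d ! : 𝕜)‖ ≤ (‖t‖ ^ 2) ^ k / k ! := by
  rw [norm_div, norm_mul, norm_pow, norm_neg, norm_one, one_pow, one_mul, norm_pow, pow_mul,
    RCLike.norm_natCast]
  gcongr

section BlockPowers

variable {ι 𝕜 : Type*} [Fintype ι] [DecidableEq ι]

theorem fromBlocks_zero_one_neg_pow_two_mul [Ring 𝕜] (A : Matrix ι ι 𝕜) (k : ℕ) :
    fromBlocks 0 1 (-A) 0 ^ (2 * k) = fromBlocks ((-A) ^ k) 0 0 ((-A) ^ k) := by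
  rw [pow_mul, sq, fromBlocks_multiply]
  simpa using fromBlocks_diagonal_pow (-A) (-A) k

theorem fromBlocks_zero_one_neg_pow_two_mul_add_one [Ring 𝕜] (A : Matrix ι ι 𝕜) (k : ℕ) :
    fromBlocks 0 1 (-A) 0 ^ (2 * k + 1) = fromBlocks 0 ((-A) ^ k) ((-A) ^ (k + 1)) 0 := by
  rw [pow_succ, fromBlocks_zero_one_neg_pow_two_mul, fromBlocks_multiply, pow_succ]
  simp

variable [Field 𝕜] (A : Matrix ι ι 𝕜) (t : 𝕜) (k : ℕ)

theorem one_div_factorial_smul_smul_fromBlocks_pow_two_mul :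
    (1 / ((2 * k) ! : 𝕜)) • (t • fromBlocks 0 1 (-A) 0) ^ (2 * k) =
      fromBlocks (((-1) ^ k * t ^ (2 * k) / ((2 * k) ! : 𝕜)) • A ^ k) 0 0
        (((-1) ^ k * t ^ (2 * k) / ((2 * k) ! : 𝕜)) • A ^ k) := by
  rw [smul_pow, fromBlocks_zero_one_neg_pow_two_mul, neg_pow_eq_neg_one_pow_smul 𝕜, smul_smul,
    fromBlocks_smul]
  simp only [smul_zero, smul_smul]
  congr 2 <;> ring

theorem one_div_factorial_smul_smul_fromBlocks_pow_two_mul_add_one :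
    (1 / ((2 * k + 1) ! : 𝕜)) • (t • fromBlocks 0 1 (-A) 0) ^ (2 * k + 1) =
      fromBlocks 0 (t • ((-1) ^ k * t ^ (2 * k) / ((2 * k + 1) ! : 𝕜)) • A ^ k)
        (-t • (A * ((-1) ^ k * t ^ (2 * k) / ((2 * k + 1) ! : 𝕜)) • A ^ k)) 0 := by
  rw [smul_pow, fromBlocks_zero_one_neg_pow_two_mul_add_one, neg_pow_eq_neg_one_pow_smul 𝕜 A k,
    neg_pow_eq_neg_one_pow_smul 𝕜 A (k + 1), smul_smul, fromBlocks_smul, mul_smul_comm,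
    ← pow_succ' A k, smul_smul, smul_smul]
  simp only [smul_zero, smul_smul]
  congr 2 <;> ring

end BlockPowers

section MatrixSeries

variable {ι : Type} [Fintype ι] [DecidableEq ι]

-- Any of the matrix norms induces the entrywise topology in which `∑'` is taken here.
theorem hasSum_mexp (X : Matrix ι ι ℂ) : HasSum (fun k => (1 / (k ! : ℂ)) • X ^ k) (mexp X) := by
  refine Summable.hasSum ?_
  simp_rw [one_div]
  exact open scoped Matrix.Norms.Operator in NormedSpace.expSeries_summable' (𝕂 := ℂ) X

theorem hasSum_cosOfSq (A : Matrix ι ι ℂ) (t : ℂ) :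
    HasSum (fun k => ((-1) ^ k * t ^ (2 * k) / ((2 * k) ! : ℂ)) • A ^ k) (cosOfSq A t) :=
  open scoped Matrix.Norms.Operator in
  (summable_smul_pow_of_norm_le
    (fun _ => norm_neg_one_pow_mul_pow_two_mul_div_factorial_le t (by omega)) A).hasSum

theorem hasSum_sincOfSq (A : Matrix ι ι ℂ) (t : ℂ) :
    HasSum (fun k => ((-1) ^ k * t ^ (2 * k) / ((2 * k + 1) ! : ℂ)) • A ^ k) (sincOfSq A t) :=
  open scoped Matrix.Norms.Operator in
  (summable_smul_pow_of_norm_le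
    (fun _ => norm_neg_one_pow_mul_pow_two_mul_div_factorial_le t (by omega)) A).hasSum

theorem mexp_smul_fromBlocks_zero_one_neg (A : Matrix ι ι ℂ) (t : ℂ) :
    mexp (t • fromBlocks 0 1 (-A) 0) =
      fromBlocks (cosOfSq A t) (t • sincOfSq A t) (-t • (A * sincOfSq A t)) (cosOfSq A t) := by
  set X : Matrix (ι ⊕ ι) (ι ⊕ ι) ℂ := t • fromBlocks 0 1 (-A) 0
  have hEven : HasSum (fun k => (1 / ((2 * k) ! : ℂ)) • X ^ (2 * k))
      (fromBlocks (cosOfSq A t) 0 0 (cosOfSq A t)) := by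
    simp_rw [X, one_div_factorial_smul_smul_fromBlocks_pow_two_mul]
    exact (hasSum_cosOfSq A t).matrix_fromBlocks hasSum_zero hasSum_zero (hasSum_cosOfSq A t)
  have hOdd : HasSum (fun k => (1 / ((2 * k + 1) ! : ℂ)) • X ^ (2 * k + 1))
      (fromBlocks 0 (t • sincOfSq A t) (-t • (A * sincOfSq A t)) 0) := by
    simp_rw [X, one_div_factorial_smul_smul_fromBlocks_pow_two_mul_add_one]
    exact hasSum_zero.matrix_fromBlocks ((hasSum_sincOfSq A t).const_smul t)
      (((hasSum_sincOfSq A t).mul_left A).const_smul (-t)) hasSum_zero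
  have hExp := hEven.even_add_odd (f := fun k => (1 / (k ! : ℂ)) • X ^ k) hOdd
  simp only [fromBlocks_add, add_zero, zero_add] at hExp
  exact (hasSum_mexp X).unique hExp

end MatrixSeries

theorem stmt15 {n : ℕ} (A : Matrix (Fin n) (Fin n) ℂ) (t : ℂ) (b z : Fin n → ℂ) :
    ∀ i : Fin n,
      (mexp (t • Matrix.fromBlocks 0 1 (-A) 0)).mulVec (Sum.elim b z) (Sum.inl i) =
        ((cosOfSq A t).mulVec b + t • (sincOfSq A t).mulVec z) i := by
  intro i
  simp [mexp_smul_fromBlocks_zero_one_neg, fromBlocks_mulVec, smul_mulVec]
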